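/- Incompleteness witness: the closed type τ := ∃β. (int = bool) ⇒ β is semantically separable (it has mode Sep), because the guard int = bool never holds, so τ is uninhabited; yet the syntactic judgment ⊢ τ : Sep is not derivable in the separability inference system, since the rule for guards requires derivability in all stronger contexts validating the equation, and the context validity judgment cannot refute int = bool. -/
import Mathlib

inductive Mode : Type
  | ind | sep | deepsep
deriving DecidableEq

def Mode.toNat : Mode → ℕ
  | .ind => 0
  | .sep => 1
  | .deepsep => 2

instance : LinearOrder Mode :=
  LinearOrder.lift' Mode.toNat (fun a b => by cases a <;> cases b <;> simp [Mode.toNat])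

/-- A fragment of type expressions: variables, the builtins int and
bool, existentials and equality guards (τ₁ = τ₂) ⇒ κ. -/
inductive Ty : Type
  | var : ℕ → Ty
  | tint : Ty
  | tbool : Ty
  | ex : ℕ → Ty → Ty
  | guard : Ty → Ty → Ty → Ty
deriving DecidableEq

abbrev Ctx := ℕ → Mode

def Ctx.upd (Γ : Ctx) (a : ℕ) (m : Mode) : Ctx :=
  fun x => if x = a then m else Γ x

def Ctx.le (Γ Γ' : Ctx) : Prop := ∀ a, Γ a ≤ Γ' a

/-- The (syntax-directed) separability judgment Γ ⊢ τ : m.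
A variable has the modes below its context mode; the builtins int and
bool have every mode; an existential is checked with the bound
variable at Ind; a guard (τ₁ = τ₂) ⇒ κ has mode m iff for every
stronger context Γ' validating the equation — i.e. in which τ₁ and τ₂
have exactly the same derivable modes — κ has mode m in Γ'. -/
def Derives (Γ : Ctx) : Ty → Mode → Prop
  | .var a, m => m ≤ Γ a
  | .tint, _ => True
  | .tbool, _ => True
  | .ex a τ, m => Derives (Γ.upd a .ind) τ m
  | .guard τ₁ τ₂ κ, m =>
      ∀ Γ' : Ctx, Ctx.le Γ Γ' →
        (∀ m' : Mode, Derives Γ' τ₁ m' ↔ Derives Γ' τ₂ m') →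
        Derives Γ' κ m

/-- Ground values. -/
inductive Value : Type
  | vfloat : ℝ → Value
  | vint : ℤ → Value
  | vbool : Bool → Value

def isfloat (v : Value) : Prop := ∃ x, v = .vfloat x

def Separable (X : Set Value) : Prop :=
  (∀ v ∈ X, isfloat v) ∨ (∀ v ∈ X, ¬ isfloat v)

/-- Semantics of type expressions under a valuation of the type
variables: a value inhabits a guard (τ₁ = τ₂) ⇒ κ iff the two sides
are equal types and it inhabits κ; it inhabits ∃α.κ iff it inhabits
some instance of κ. -/
def sem (ρ : ℕ → Set Value) : Ty → Set Value
  | .var a => ρ a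
  | .tint => {v | ∃ n, v = .vint n}
  | .tbool => {v | ∃ b, v = .vbool b}
  | .ex a κ => {v | ∃ S : Set Value, v ∈ sem (fun x => if x = a then S else ρ x) κ}
  | .guard τ₁ τ₂ κ => {v | τ₁ = τ₂ ∧ v ∈ sem ρ κ}

/-- The incompleteness witness τ := ∃β. (int = bool) ⇒ β. -/
def witness : Ty := .ex 0 (.guard .tint .tbool (.var 0))

/-- Incompleteness: the closed type ∃β.(int = bool) ⇒ β is uninhabited,
hence semantically separable (it has mode Sep); yet ⊢ τ : Sep is not
derivable, since every context validates int = bool (both have all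
modes everywhere) and β only has mode Ind. -/
theorem incompleteness_witness (ρ : ℕ → Set Value) (Γ : Ctx) :
    sem ρ witness = ∅ ∧ Separable (sem ρ witness) ∧
    ¬ Derives Γ witness .sep := by
  have hempty : sem ρ witness = ∅ := by
    ext v
    simp only [witness, sem, Set.mem_setOf_eq, Set.mem_empty_iff_false, iff_false]
    rintro ⟨S, h, -⟩
    exact Ty.noConfusion h
  refine ⟨hempty, Or.inl (by simp [hempty]), ?_⟩
  intro h
  have := h (Γ.upd 0 .ind) (fun a => le_refl _) (fun m' => by simp [Derives])
  have h2 : (Mode.sep ≤ Mode.ind) := by simpa [Derives, Ctx.upd] using this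
  exact absurd h2 (by decide)
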